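/- Let μ > 0 and let p ∈ V_μ. Then G[p] ≥ G[p*], where p* is the shifted Bernoulli distribution with mean μ; that is, p* minimizes the Gini index over V_μ. -/

import Mathlib

/-- Cumulative distribution function of a pmf on ℕ: `F n = ∑_{m ≤ n} p m`. -/
noncomputable def cdf (p : ℕ → ℝ) (n : ℕ) : ℝ := ∑ m ∈ Finset.range (n + 1), p m

/-- Wasserstein-1 distance between two pmfs on ℕ, `W1(p,q) = ∑_{n ≥ 0} |F_n - H_n|`. -/
noncomputable def W1 (p q : ℕ → ℝ) : ℝ := ∑' n : ℕ, |cdf p n - cdf q n|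

/-- Gini index of a pmf on ℕ with mean μ: `G[p] = (1/(2μ)) ∑_i ∑_j |i-j| p_i p_j`. -/
noncomputable def Gini (μ : ℝ) (p : ℕ → ℝ) : ℝ :=
  (1 / (2 * μ)) * ∑' i : ℕ, ∑' j : ℕ, |(i : ℝ) - (j : ℝ)| * p i * p j

/-- The shifted Bernoulli distribution with mean μ:
`p*_{⌊μ⌋} = 1 - μ + ⌊μ⌋`, `p*_{⌊μ⌋+1} = μ - ⌊μ⌋`, `p*_n = 0` otherwise. -/
noncomputable def pstar (μ : ℝ) : ℕ → ℝ := fun n =>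
  if n = ⌊μ⌋₊ then 1 - μ + (⌊μ⌋₊ : ℝ)
  else if n = ⌊μ⌋₊ + 1 then μ - (⌊μ⌋₊ : ℝ)
  else 0

/-- The Dirac distribution on ℕ concentrated at `k`. -/
noncomputable def dirac (k : ℕ) : ℕ → ℝ := fun n => if n = k then 1 else 0

/-!
Let `aₙ = 1 - cdf p n` be the tail of `p`, so `aₙ ∈ [0, 1]` and `∑ aₙ = μ`. The distance
`|i - j|` counts the thresholds `n` with exactly one of `i, j` above `n`, and two independent
draws from `p` are separated by `n` with probability `2 aₙ (1 - aₙ)`; hence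
`∑ᵢ ∑ⱼ |i - j| pᵢ pⱼ ≥ 2 ∑ aₙ (1 - aₙ)`. Adding masses in `[0, 1]` one at a time shows that
`∑ aₙ (1 - aₙ) ≥ θ (1 - θ)` whenever `∑ aₙ = k + θ` with `k ∈ ℤ`, `θ ∈ [0, 1]`; for
`θ = μ - ⌊μ⌋` the bound `2 θ (1 - θ)` is exactly the double sum of `pstar μ`.
-/

open Finset Filter Topology

noncomputable def threshold (n i : ℕ) : ℝ := if n < i then 1 else 0

lemma sum_range_threshold (i N : ℕ) : ∑ n ∈ range N, threshold n i = (min i N : ℕ) := by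
  have : (range N).filter (· < i) = range (min i N) := by
    ext n; simp only [mem_filter, mem_range, lt_min_iff]; tauto
  simp only [threshold, sum_boole, this, card_range]

lemma sum_range_abs_threshold_sub_le (i j N : ℕ) :
    ∑ n ∈ range N, |threshold n i - threshold n j| ≤ |(i : ℝ) - j| := by
  wlog hij : i ≤ j generalizing i j
  · simpa only [abs_sub_comm] using this j i (le_of_not_ge hij)
  have hmono (n : ℕ) : threshold n i ≤ threshold n j := by
    unfold threshold; split_ifs <;> first | omega | norm_num
  have hmin : ((min j N + i : ℕ) : ℝ) ≤ ((j + min i N : ℕ) : ℝ) := by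
    exact_mod_cast (by omega : min j N + i ≤ j + min i N)
  push_cast at hmin
  calc ∑ n ∈ range N, |threshold n i - threshold n j|
      = ∑ n ∈ range N, (threshold n j - threshold n i) :=
        sum_congr rfl fun n _ => by rw [abs_sub_comm, abs_of_nonneg (sub_nonneg.2 (hmono n))]
    _ = ((min j N : ℕ) : ℝ) - (min i N : ℕ) := by
        rw [sum_sub_distrib, sum_range_threshold, sum_range_threshold]
    _ ≤ |(i : ℝ) - j| := by
        rw [abs_sub_comm]; push_cast; exact (by linarith : _ ≤ (j : ℝ) - i).trans (le_abs_self _)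

section

variable {p : ℕ → ℝ} {μ : ℝ}

lemma cdf_nonneg (hpos : ∀ n, 0 ≤ p n) (n : ℕ) : 0 ≤ cdf p n :=
  sum_nonneg fun i _ => hpos i

lemma cdf_le_one (hpos : ∀ n, 0 ≤ p n) (hsum : HasSum p 1) (n : ℕ) : cdf p n ≤ 1 :=
  sum_le_hasSum _ (fun i _ => hpos i) hsum

lemma hasSum_threshold_mul (hsum : HasSum p 1) (n : ℕ) :
    HasSum (fun i => threshold n i * p i) (1 - cdf p n) := by
  have hlow : HasSum (fun i => if i < n + 1 then p i else 0) (cdf p n) := by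
    have : HasSum _ _ := hasSum_sum_of_ne_finset_zero (s := range (n + 1))
      (f := fun i => if i < n + 1 then p i else 0) fun i hi => if_neg (by simpa using hi)
    rwa [sum_congr rfl fun i hi => if_pos (mem_range.1 hi)] at this
  refine (hsum.sub hlow).congr_fun fun i => ?_
  unfold threshold; split_ifs <;> first | omega | ring

lemma hasSum_one_sub_cdf (hpos : ∀ n, 0 ≤ p n) (hsum : HasSum p 1)
    (hmean : HasSum (fun n : ℕ => (n : ℝ) * p n) μ) : HasSum (fun n => 1 - cdf p n) μ := by
  -- The partial sums are `E[min X N]`, which tend to `E[X]` by dominated convergence.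
  have hpartial (N : ℕ) : ∑ n ∈ range N, (1 - cdf p n) = ∑' i, ((min i N : ℕ) : ℝ) * p i := by
    rw [← (hasSum_sum fun n (_ : n ∈ range N) => hasSum_threshold_mul hsum n).tsum_eq]
    simp only [← sum_mul, sum_range_threshold]
  rw [hasSum_iff_tendsto_nat_of_nonneg (fun n => sub_nonneg.2 (cdf_le_one hpos hsum n)),
    funext hpartial, ← hmean.tsum_eq]
  refine tendsto_tsum_of_dominated_convergence hmean.summable (fun i => ?_)
    (Eventually.of_forall fun N i => ?_)
  · exact tendsto_const_nhds.congr' <|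
      (eventually_ge_atTop i).mono fun N hN => by dsimp only; rw [min_eq_left hN]
  · rw [Real.norm_eq_abs, abs_of_nonneg (mul_nonneg (Nat.cast_nonneg _) (hpos i))]
    exact mul_le_mul_of_nonneg_right (by exact_mod_cast min_le_left i N) (hpos i)

lemma abs_sub_mul_mul_le (hpos : ∀ n, 0 ≤ p n) (i j : ℕ) :
    |(i : ℝ) - j| * p i * p j ≤ ((i : ℝ) + j) * p i * p j := by
  have := hpos i; have := hpos j
  gcongr
  exact abs_sub_le_iff.2
    ⟨by linarith [j.cast_nonneg (α := ℝ)], by linarith [i.cast_nonneg (α := ℝ)]⟩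

lemma hasSum_add_mul_mul (hsum : HasSum p 1) (hmean : HasSum (fun n : ℕ => (n : ℝ) * p n) μ)
    (i : ℕ) : HasSum (fun j : ℕ => ((i : ℝ) + j) * p i * p j) (((i : ℝ) + μ) * p i) := by
  rw [show ((i : ℝ) + μ) * p i = (i : ℝ) * p i * 1 + p i * μ by ring]
  exact ((hsum.mul_left _).add (hmean.mul_left (p i))).congr_fun fun j => by ring

lemma summable_abs_sub_mul_mul (hpos : ∀ n, 0 ≤ p n) (hsum : HasSum p 1)
    (hmean : HasSum (fun n : ℕ => (n : ℝ) * p n) μ) (i : ℕ) :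
    Summable fun j : ℕ => |(i : ℝ) - j| * p i * p j :=
  .of_nonneg_of_le (fun j : ℕ => by have := hpos i; have := hpos j; positivity)
    (abs_sub_mul_mul_le hpos i) (hasSum_add_mul_mul hsum hmean i).summable

lemma summable_tsum_abs_sub_mul_mul (hpos : ∀ n, 0 ≤ p n) (hsum : HasSum p 1)
    (hmean : HasSum (fun n : ℕ => (n : ℝ) * p n) μ) :
    Summable fun i : ℕ => ∑' j : ℕ, |(i : ℝ) - j| * p i * p j := by
  refine .of_nonneg_of_le
    (fun i => tsum_nonneg fun j : ℕ => by have := hpos i; have := hpos j; positivity)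
    (fun i => hasSum_le (abs_sub_mul_mul_le hpos i)
      (summable_abs_sub_mul_mul hpos hsum hmean i).hasSum (hasSum_add_mul_mul hsum hmean i)) ?_
  exact ((hmean.add (hsum.mul_left μ)).congr_fun fun i => by ring).summable

lemma hasSum_abs_threshold_sub_mul_mul (hsum : HasSum p 1) (n i : ℕ) :
    HasSum (fun j => |threshold n i - threshold n j| * p i * p j)
      (p i * (threshold n i * cdf p n + (1 - threshold n i) * (1 - cdf p n))) := by
  have key (j : ℕ) : |threshold n i - threshold n j| * p i * p j
      = p i * ((1 - 2 * threshold n i) * (threshold n j * p j) + threshold n i * p j) := by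
    unfold threshold; split_ifs <;> norm_num
  rw [show threshold n i * cdf p n + (1 - threshold n i) * (1 - cdf p n)
      = (1 - 2 * threshold n i) * (1 - cdf p n) + threshold n i * 1 by ring]
  exact ((((hasSum_threshold_mul hsum n).mul_left _).add (hsum.mul_left _)).mul_left _).congr_fun
    key

lemma hasSum_tsum_abs_threshold_sub_mul_mul (hsum : HasSum p 1) (n : ℕ) :
    HasSum (fun i => ∑' j, |threshold n i - threshold n j| * p i * p j)
      (2 * ((1 - cdf p n) * cdf p n)) := by
  simp only [fun i => (hasSum_abs_threshold_sub_mul_mul hsum n i).tsum_eq]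
  rw [show 2 * ((1 - cdf p n) * cdf p n) = (2 * cdf p n - 1) * (1 - cdf p n) + (1 - cdf p n) * 1
    by ring]
  exact (((hasSum_threshold_mul hsum n).mul_left _).add (hsum.mul_left _)).congr_fun
    fun i => by ring

lemma two_mul_tsum_le_tsum_abs_sub_mul_mul (hpos : ∀ n, 0 ≤ p n) (hsum : HasSum p 1)
    (hmean : HasSum (fun n : ℕ => (n : ℝ) * p n) μ) :
    2 * ∑' n, (1 - cdf p n) * cdf p n ≤ ∑' i : ℕ, ∑' j : ℕ, |(i : ℝ) - j| * p i * p j := by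
  rw [← tsum_mul_left]
  refine Real.tsum_le_of_sum_range_le (fun n => ?_) fun N => ?_
  · have := cdf_nonneg hpos n; have := cdf_le_one hpos hsum n
    nlinarith
  have hrow (i : ℕ) : ∑ n ∈ range N, ∑' j, |threshold n i - threshold n j| * p i * p j
      ≤ ∑' j : ℕ, |(i : ℝ) - j| * p i * p j := by
    refine hasSum_le (fun j => ?_)
      (hasSum_sum fun n _ => (hasSum_abs_threshold_sub_mul_mul hsum n i).summable.hasSum)
      (summable_abs_sub_mul_mul hpos hsum hmean i).hasSum
    have := hpos i; have := hpos j
    rw [← sum_mul, ← sum_mul]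
    gcongr
    exact sum_range_abs_threshold_sub_le i j N
  exact hasSum_le hrow (hasSum_sum fun n _ => hasSum_tsum_abs_threshold_sub_mul_mul hsum n)
    (summable_tsum_abs_sub_mul_mul hpos hsum hmean).hasSum

end

lemma sub_mul_sub_le_sum_range_mul_one_sub {a : ℕ → ℝ} (ha : ∀ n, 0 ≤ a n ∧ a n ≤ 1) (N : ℕ)
    (k : ℤ) (hk : k ≤ ∑ n ∈ range N, a n) (hk' : ∑ n ∈ range N, a n ≤ k + 1) :
    (∑ n ∈ range N, a n - k) * (k + 1 - ∑ n ∈ range N, a n) ≤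
      ∑ n ∈ range N, a n * (1 - a n) := by
  induction N generalizing k with
  | zero =>
    simp only [range_zero, sum_empty] at *
    obtain rfl | rfl : k = 0 ∨ k = -1 := by
      have : k ≤ 0 := by exact_mod_cast hk
      have : -1 ≤ k := by linarith [(by exact_mod_cast hk' : (0 : ℤ) ≤ k + 1)]
      omega
    all_goals norm_num
  | succ N ih =>
    simp only [sum_range_succ] at *
    obtain ⟨h0, h1⟩ := ha N
    -- With `u = S - k`: `(u + a)(1 - u - a) = u(1 - u) + a(1 - a) - 2ua`, and if `u + a` passes
    -- `1` then `(u + a - 1)(2 - u - a) = u(1 - u) + a(1 - a) - 2(1 - u)(1 - a)`.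
    rcases le_or_gt (k : ℝ) (∑ n ∈ range N, a n) with hS | hS
    · have := ih k hS (by linarith)
      nlinarith
    · have := ih (k - 1) (by push_cast; linarith) (by push_cast; linarith)
      push_cast at this
      nlinarith

lemma sub_mul_sub_le_tsum_mul_one_sub {a : ℕ → ℝ} {s : ℝ} (ha : ∀ n, 0 ≤ a n ∧ a n ≤ 1)
    (hs : HasSum a s) (k : ℤ) (hk : k ≤ s) (hk' : s ≤ k + 1) :
    (s - k) * (k + 1 - s) ≤ ∑' n, a n * (1 - a n) := by
  have hnonneg (n : ℕ) : 0 ≤ a n * (1 - a n) := mul_nonneg (ha n).1 (sub_nonneg.2 (ha n).2)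
  have hsummable : Summable fun n => a n * (1 - a n) :=
    .of_nonneg_of_le hnonneg (fun n => by nlinarith [ha n]) hs.summable
  rcases hk.eq_or_lt with hks | hks
  · simpa [hks] using tsum_nonneg hnonneg
  have hpartial := hs.tendsto_sum_nat
  refine le_of_tendsto ((hpartial.sub_const _).mul (tendsto_const_nhds.sub hpartial)) ?_
  filter_upwards [hpartial.eventually_const_lt hks] with N hN
  have hNs : ∑ n ∈ range N, a n ≤ s := sum_le_hasSum _ (fun n _ => (ha n).1) hs
  exact (sub_mul_sub_le_sum_range_mul_one_sub ha N k hN.le (hNs.trans hk')).trans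
    (hsummable.sum_le_tsum _ fun n _ => hnonneg n)

lemma hasSum_pstar_mul (μ : ℝ) (f : ℕ → ℝ) :
    HasSum (fun n => pstar μ n * f n)
      ((1 - μ + ⌊μ⌋₊) * f ⌊μ⌋₊ + (μ - ⌊μ⌋₊) * f (⌊μ⌋₊ + 1)) := by
  have : HasSum _ _ := hasSum_sum_of_ne_finset_zero (s := {⌊μ⌋₊, ⌊μ⌋₊ + 1})
    (f := fun n => pstar μ n * f n) fun n hn => by
      simp only [mem_insert, mem_singleton, not_or] at hn
      simp [pstar, hn.1, hn.2]
  simpa [sum_pair, pstar] using this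

lemma tsum_abs_sub_mul_pstar_mul_pstar (μ : ℝ) :
    ∑' i : ℕ, ∑' j : ℕ, |(i : ℝ) - j| * pstar μ i * pstar μ j
      = 2 * ((μ - ⌊μ⌋₊) * (⌊μ⌋₊ + 1 - μ)) := by
  have hrow (i : ℕ) : ∑' j : ℕ, |(i : ℝ) - j| * pstar μ i * pstar μ j
      = pstar μ i *
          ((1 - μ + ⌊μ⌋₊) * |(i : ℝ) - ⌊μ⌋₊| + (μ - ⌊μ⌋₊) * |(i : ℝ) - (⌊μ⌋₊ + 1)|) := by
    calc ∑' j : ℕ, |(i : ℝ) - j| * pstar μ i * pstar μ j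
        = ∑' j : ℕ, pstar μ j * (|(i : ℝ) - j| * pstar μ i) := tsum_congr fun j => by ring
      _ = _ := by rw [(hasSum_pstar_mul μ _).tsum_eq]; push_cast; ring
  rw [tsum_congr hrow, (hasSum_pstar_mul μ _).tsum_eq]
  norm_num
  ring

theorem stmt_16 (μ : ℝ) (hμ : 0 < μ) (p : ℕ → ℝ)
    (hpos : ∀ n, 0 ≤ p n) (hsum : HasSum p 1)
    (hmean : HasSum (fun n : ℕ => (n : ℝ) * p n) μ) :
    Gini μ p ≥ Gini μ (pstar μ) := by
  have hcdf (n : ℕ) : 0 ≤ 1 - cdf p n ∧ 1 - cdf p n ≤ 1 :=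
    ⟨sub_nonneg.2 (cdf_le_one hpos hsum n), by linarith [cdf_nonneg hpos n]⟩
  have hlower := sub_mul_sub_le_tsum_mul_one_sub hcdf (hasSum_one_sub_cdf hpos hsum hmean) ⌊μ⌋₊
    (by simpa using Nat.floor_le hμ.le) (by simpa using (Nat.lt_floor_add_one μ).le)
  have hgini := two_mul_tsum_le_tsum_abs_sub_mul_mul hpos hsum hmean
  simp only [sub_sub_cancel, Int.cast_natCast] at hlower
  rw [ge_iff_le, Gini, Gini, tsum_abs_sub_mul_pstar_mul_pstar]
  gcongr
  linarith
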